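/- arXiv:2310.19473 — 10 statements merged into one kernel-verified Lean document; each statement's English description precedes it below -/
import Mathlib

section
/- Let F be a family of entire functions with |F| < 2^ℵ₀. Then there exists a complex number z such that the map f ↦ f(z) is injective on F; in particular |{f(z) : f ∈ F}| = |F|. -/
open Cardinal Set Filter Topology

lemma countable_eq_set {f g : ℂ → ℂ} (hf : Differentiable ℂ f) (hg : Differentiable ℂ g)
    (hne : f ≠ g) : {z : ℂ | f z = g z}.Countable := by
  set h : ℂ → ℂ := f - g with hh
  have hha : AnalyticOnNhd ℂ h Set.univ := by
    exact Complex.analyticOnNhd_univ_iff_differentiable.mpr (hf.sub hg)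
  have hset : {z : ℂ | f z = g z} = {z : ℂ | h z = 0} := by
    ext z; simp [hh, sub_eq_zero]
  rw [hset]
  set Z : Set ℂ := {z : ℂ | h z = 0}
  have hiso : ∀ x ∈ Z, ∀ᶠ w in 𝓝[≠] x, h w ≠ 0 := by
    intro x hx
    rcases (hha x (Set.mem_univ x)).eventually_eq_zero_or_eventually_ne_zero with h0 | h1
    · exfalso
      have : EqOn h 0 Set.univ :=
        hha.eqOn_zero_of_preconnected_of_eventuallyEq_zero isPreconnected_univ
          (Set.mem_univ x) h0
      apply hne
      funext z
      have := this (Set.mem_univ z)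
      simpa [hh, sub_eq_zero] using this
    · exact h1
  haveI : DiscreteTopology Z := by
    rw [discreteTopology_subtype_iff]
    intro x hx
    have := hiso x hx
    rw [Filter.eventually_iff] at this
    rw [← Filter.empty_mem_iff_bot]
    refine Filter.mem_inf_of_inter this (Filter.mem_principal_self _) ?_
    rintro w ⟨hw1, hw2⟩
    exact hw1 hw2
  have : Countable Z := TopologicalSpace.separableSpace_iff_countable.mp inferInstance
  exact Set.countable_coe_iff.mp this

theorem exists_injective_eval (F : Set (ℂ → ℂ)) (hF : ∀ f ∈ F, Differentiable ℂ f)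
    (hcard : Cardinal.mk F < Cardinal.continuum) :
    ∃ z : ℂ, Set.InjOn (fun f : ℂ → ℂ => f z) F ∧
      Cardinal.mk ((fun f : ℂ → ℂ => f z) '' F) = Cardinal.mk F := by
  classical
  set S : F × F → Set ℂ := fun p =>
    if (p.1 : ℂ → ℂ) = (p.2 : ℂ → ℂ) then ∅ else {z : ℂ | (p.1 : ℂ → ℂ) z = (p.2 : ℂ → ℂ) z}
  have hScount : ∀ p, (S p).Countable := by
    rintro ⟨f, g⟩
    by_cases h : (f : ℂ → ℂ) = (g : ℂ → ℂ)
    · simp [S, h]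
    · simpa [S, h] using countable_eq_set (hF f f.2) (hF g g.2) h
  have hbad : Cardinal.mk (⋃ p, S p) < Cardinal.continuum := by
    calc Cardinal.mk (⋃ p, S p) ≤ Cardinal.mk (F × F) * ⨆ p, Cardinal.mk (S p) :=
          Cardinal.mk_iUnion_le _
      _ ≤ Cardinal.mk (F × F) * ℵ₀ := by
          gcongr
          exact ciSup_le' fun p => (hScount p).le_aleph0
      _ < Cardinal.continuum := by
          apply Cardinal.mul_lt_of_lt Cardinal.aleph0_le_continuum
          · rw [Cardinal.mk_prod]
            simpa using Cardinal.mul_lt_of_lt Cardinal.aleph0_le_continuum hcard hcard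
          · exact Cardinal.aleph0_lt_continuum
  have hne : (⋃ p, S p) ≠ Set.univ := by
    intro h
    rw [h] at hbad
    simp [Cardinal.mk_univ, mk_complex] at hbad
  obtain ⟨z, hz⟩ : ∃ z : ℂ, z ∉ ⋃ p, S p := by
    by_contra h
    push_neg at h
    exact hne (Set.eq_univ_of_forall h)
  refine ⟨z, ?_, ?_⟩
  · intro f hf g hg hfg
    by_contra hne'
    apply hz
    refine Set.mem_iUnion.2 ⟨(⟨f, hf⟩, ⟨g, hg⟩), ?_⟩
    simp only [S, if_neg hne']
    exact hfg
  · have hinj : Set.InjOn (fun f : ℂ → ℂ => f z) F := by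
      intro f hf g hg hfg
      by_contra hne'
      apply hz
      refine Set.mem_iUnion.2 ⟨(⟨f, hf⟩, ⟨g, hg⟩), ?_⟩
      simp only [S, if_neg hne']
      exact hfg
    exact Cardinal.mk_image_eq_of_injOn _ _ hinj
end

section
/- Let F be a Wetzel family and λ < 2^ℵ₀ a cardinal. Then the set of complex numbers z with |{f(z) : f ∈ F}| < λ has cardinality strictly less than 2^ℵ₀. -/
def IsWetzel (F : Set (ℂ → ℂ)) : Prop :=
  (∀ f ∈ F, Differentiable ℂ f) ∧
    ∀ z : ℂ, Cardinal.mk ((fun f : ℂ → ℂ => f z) '' F) < Cardinal.mk F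

/-!
Distinct entire functions agree only on a countable set, so for a family `G` of fewer than `𝔠`
of them, the points where evaluation is not injective on `G` form a union of `#G * #G` countable
sets, hence fewer than `𝔠` points. Taking `G = F` shows that a Wetzel family has size at least `𝔠`,
so `F` contains a subfamily `G` of size `λ`; every `z` with fewer than `λ` values `f z` is a point
where evaluation is not injective on `G`.
-/

open Cardinal Set

theorem Differentiable.countable_setOf_eq {E : Type*} [NormedAddCommGroup E] [NormedSpace ℂ E]
    [CompleteSpace E] {f g : ℂ → E} (hf : Differentiable ℂ f) (hg : Differentiable ℂ g)
    (hne : f ≠ g) : {z | f z = g z}.Countable := by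
  rcases (Complex.analyticOnNhd_univ_iff_differentiable.mpr hf).eqOn_or_eventually_ne_of_preconnected
      (Complex.analyticOnNhd_univ_iff_differentiable.mpr hg) isPreconnected_univ with heq | hne'
  · exact absurd (funext fun z => heq (mem_univ z)) hne
  · simpa using (HereditarilyLindelofSpace.isLindelof _).countable_of_isDiscrete
      (isDiscrete_of_codiscreteWithin (s := {z | f z = g z}) hne')

universe u

theorem mk_setOf_not_injOn_eval_lt_continuum {α β : Type u} {G : Set (α → β)}
    (hG : G.Pairwise fun f g => {z | f z = g z}.Countable) (hGc : #G < 𝔠) :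
    #{z | ¬InjOn (fun f => f z) G} < 𝔠 := by
  have hsub : {z | ¬InjOn (fun f => f z) G} ⊆ ⋃ p ∈ G.offDiag, {z | p.1 z = p.2 z} := by
    intro z hz
    simp only [InjOn, not_forall] at hz
    obtain ⟨f, hf, g, hg, hfg, hne⟩ := hz
    exact mem_biUnion (x := (f, g)) ⟨hf, hg, hne⟩ hfg
  calc #{z | ¬InjOn (fun f => f z) G}
      ≤ #(⋃ p ∈ G.offDiag, {z | p.1 z = p.2 z}) := mk_le_mk_of_subset hsub
    _ ≤ #G.offDiag * ⨆ p : G.offDiag, #{z | p.1.1 z = p.1.2 z} := mk_biUnion_le _ _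
    _ ≤ #G * #G * ℵ₀ := by
        rw [← mk_setProd]
        gcongr
        · exact mk_le_mk_of_subset G.offDiag_subset_prod
        · exact ciSup_le' fun p => (hG p.2.1 p.2.2.1 p.2.2.2).le_aleph0
    _ < 𝔠 := mul_lt_of_lt aleph0_le_continuum
        (mul_lt_of_lt aleph0_le_continuum hGc hGc) aleph0_lt_continuum

theorem IsWetzel.pairwise_countable_setOf_eq {F : Set (ℂ → ℂ)} (hF : IsWetzel F) :
    F.Pairwise fun f g => {z | f z = g z}.Countable :=
  fun _ hf _ hg hne => (hF.1 _ hf).countable_setOf_eq (hF.1 _ hg) hne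

theorem mk_le_mk_image_eval_of_injOn {α β : Type u} {G F : Set (α → β)} (hGF : G ⊆ F) {z : α}
    (hinj : InjOn (fun f => f z) G) : #G ≤ #((fun f => f z) '' F) :=
  (mk_image_eq_of_injOn _ _ hinj).symm.trans_le (mk_le_mk_of_subset (image_mono hGF))

theorem IsWetzel.continuum_le_mk {F : Set (ℂ → ℂ)} (hF : IsWetzel F) : 𝔠 ≤ #F := by
  by_contra! hlt
  obtain ⟨z, hz⟩ : ∃ z, InjOn (fun f => f z) F := by
    by_contra! hall
    have hsmall := mk_setOf_not_injOn_eval_lt_continuum hF.pairwise_countable_setOf_eq hlt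
    have huniv : {z : ℂ | ¬InjOn (fun f => f z) F} = Set.univ := eq_univ_of_forall hall
    rw [huniv, mk_univ, mk_complex] at hsmall
    exact hsmall.false
  exact (mk_le_mk_image_eval_of_injOn subset_rfl hz).not_gt (hF.2 z)

theorem wetzel_small_fibers (F : Set (ℂ → ℂ)) (hF : IsWetzel F)
    (lam : Cardinal) (hlam : lam < Cardinal.continuum) :
    Cardinal.mk {z : ℂ | Cardinal.mk ((fun f : ℂ → ℂ => f z) '' F) < lam} <
      Cardinal.continuum := by
  obtain ⟨G, hGF, rfl⟩ := le_mk_iff_exists_subset.mp (hlam.le.trans hF.continuum_le_mk)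
  refine (mk_le_mk_of_subset fun z hz hinj => ?_).trans_lt
    (mk_setOf_not_injOn_eval_lt_continuum (hF.pairwise_countable_setOf_eq.mono hGF) hlam)
  exact (mk_le_mk_image_eval_of_injOn hGF hinj).not_gt hz
end

section
/- Assume the continuum hypothesis (2^ℵ₀ = ℵ₁). Then every countable dense subset Y of ℂ is universal: for every set X ⊆ ℂ with |X| < 2^ℵ₀ there is a non-constant entire function f with f(X) ⊆ Y. -/
/-!
Under CH a set of size below the continuum is countable, so it suffices to send a sequence of
distinct points `z₀, z₁, …` into a dense set `Y`. Take `f = ∑ ξₙ Pₙ` with the Newton basis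
`Pₙ(w) = ∏_{m<n} (w - z_m)`. Since `Pₖ(zₙ) = 0` for `k > n` and `Pₙ(zₙ) ≠ 0`, the value `f(zₙ)`
depends only on `ξ₀, …, ξₙ` and is moved freely by `ξₙ`; by density `ξₙ` can be chosen nonzero
and so small that the series converges locally uniformly, whence `f` is entire, and
`f(z₁) - f(z₀) = ξ₁ (z₁ - z₀) ≠ 0`.
-/

open Finset Metric Filter Function Cardinal

universe u v

noncomputable section

section CommRing

variable {R : Type*} [CommRing R]

def newtonBasis (z : ℕ → R) (n : ℕ) (w : R) : R :=
  ∏ m ∈ range n, (w - z m)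

lemma newtonBasis_apply_of_lt {z : ℕ → R} {k n : ℕ} (h : n < k) : newtonBasis z k (z n) = 0 :=
  prod_eq_zero (mem_range.2 h) (sub_self _)

lemma newtonBasis_apply_self_ne_zero [IsDomain R] {z : ℕ → R} (hz : Injective z) (n : ℕ) :
    newtonBasis z n (z n) ≠ 0 :=
  prod_ne_zero_iff.2 fun _ hm => sub_ne_zero.2 fun h => (mem_range.1 hm).ne' (hz h)

variable [TopologicalSpace R]

def newtonSeries (z ξ : ℕ → R) (w : R) : R :=
  ∑' n, ξ n * newtonBasis z n w

lemma newtonSeries_apply_eq_sum (z ξ : ℕ → R) (n : ℕ) :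
    newtonSeries z ξ (z n) = ∑ k ∈ range (n + 1), ξ k * newtonBasis z k (z n) :=
  tsum_eq_sum fun _ hk => by
    rw [newtonBasis_apply_of_lt (by simpa using hk), mul_zero]

lemma newtonSeries_apply_one_sub_apply_zero (z ξ : ℕ → R) :
    newtonSeries z ξ (z 1) - newtonSeries z ξ (z 0) = ξ 1 * (z 1 - z 0) := by
  simp [newtonSeries_apply_eq_sum, sum_range_succ, newtonBasis]

lemma newtonSeries_ne_const [IsDomain R] {z ξ : ℕ → R} (hz : z 1 ≠ z 0) (hξ : ξ 1 ≠ 0)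
    (c : R) : newtonSeries z ξ ≠ fun _ => c := by
  intro h
  have := newtonSeries_apply_one_sub_apply_zero z ξ
  rw [h, sub_self] at this
  exact mul_ne_zero hξ (sub_ne_zero.2 hz) this.symm

end CommRing

section Normed

variable {R : Type*} [NormedCommRing R]

def newtonBound (z : ℕ → R) (r : ℝ) (n : ℕ) : ℝ :=
  ∏ m ∈ range n, (r + ‖z m‖)

lemma newtonBound_nonneg (z : ℕ → R) {r : ℝ} (hr : 0 ≤ r) (n : ℕ) : 0 ≤ newtonBound z r n :=
  prod_nonneg fun _ _ => by positivity

lemma newtonBound_mono (z : ℕ → R) {r s : ℝ} (hr : 0 ≤ r) (hrs : r ≤ s) (n : ℕ) :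
    newtonBound z r n ≤ newtonBound z s n :=
  prod_le_prod (fun _ _ => by positivity) fun _ _ => by gcongr

lemma norm_newtonBasis_le [NormOneClass R] (z : ℕ → R) (n : ℕ) {r : ℝ} {w : R}
    (hw : ‖w‖ ≤ r) :
    ‖newtonBasis z n w‖ ≤ newtonBound z r n :=
  (Finset.norm_prod_le _ _).trans <| prod_le_prod (fun _ _ => norm_nonneg _) fun _ _ =>
    (norm_sub_le _ _).trans (by gcongr)

end Normed

lemma differentiable_newtonBasis {𝕜 : Type*} [NontriviallyNormedField 𝕜] (z : ℕ → 𝕜) (n : ℕ) :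
    Differentiable 𝕜 (newtonBasis z n) := by
  unfold newtonBasis
  fun_prop

/-- Summability along the diagonal `r = n` controls every radius `r`, since `r ≤ n` eventually. -/
theorem differentiable_newtonSeries {z ξ : ℕ → ℂ}
    (hξ : Summable fun n => ‖ξ n‖ * newtonBound z n n) :
    Differentiable ℂ (newtonSeries z ξ) := by
  intro w
  obtain ⟨N, hN⟩ := exists_nat_gt ‖w‖
  have hsum : Summable fun n => ‖ξ n‖ * newtonBound z N n := by
    refine hξ.of_norm_bounded_eventually ?_
    rw [Nat.cofinite_eq_atTop]
    filter_upwards [eventually_ge_atTop N] with n hn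
    rw [Real.norm_of_nonneg (by have := newtonBound_nonneg z N.cast_nonneg n; positivity)]
    gcongr
    exact newtonBound_mono z N.cast_nonneg (by exact_mod_cast hn) n
  have hdiff : DifferentiableOn ℂ (newtonSeries z ξ) (ball 0 N) :=
    Complex.differentiableOn_tsum_of_summable_norm hsum
      (fun n => ((differentiable_newtonBasis z n).const_mul (ξ n)).differentiableOn) isOpen_ball
      fun n w hw => by
        rw [norm_mul]
        gcongr
        exact norm_newtonBasis_le z n (mem_ball_zero_iff.1 hw).le
  exact hdiff.differentiableAt (isOpen_ball.mem_nhds (mem_ball_zero_iff.2 hN))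

lemma Dense.exists_ne_zero_norm_le_add_mul_mem {𝕜 : Type*} [NontriviallyNormedField 𝕜]
    {Y : Set 𝕜} (hY : Dense Y) (a : 𝕜) {b : 𝕜} (hb : b ≠ 0) {ε : ℝ} (hε : 0 < ε) :
    ∃ c : 𝕜, c ≠ 0 ∧ ‖c‖ ≤ ε ∧ a + c * b ∈ Y := by
  obtain ⟨y, ⟨hyY, hne⟩, hya⟩ := (hY.sdiff_singleton a).exists_mem_open isOpen_ball
    (nonempty_ball.2 (mul_pos hε (norm_pos_iff.2 hb)))
  refine ⟨(y - a) / b, div_ne_zero (sub_ne_zero.2 hne) hb, ?_, ?_⟩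
  · rw [norm_div, div_le_iff₀ (norm_pos_iff.2 hb), ← dist_eq_norm]
    exact (mem_ball.1 hya).le
  · rwa [div_mul_cancel₀ _ hb, add_sub_cancel]

lemma Dense.exists_newtonCoeffs_partialSum_mem {𝕜 : Type*} [NontriviallyNormedField 𝕜]
    {z : ℕ → 𝕜} (hz : Injective z) {Y : Set 𝕜} (hY : Dense Y) {ε : ℕ → ℝ} (hε : ∀ n, 0 < ε n) :
    ∃ ξ : ℕ → 𝕜, ∀ n, ξ n ≠ 0 ∧ ‖ξ n‖ ≤ ε n ∧
      ∑ k ∈ range (n + 1), ξ k * newtonBasis z k (z n) ∈ Y := by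
  choose c hc using fun n a =>
    hY.exists_ne_zero_norm_le_add_mul_mem a (newtonBasis_apply_self_ne_zero hz n) (hε n)
  -- the partial sums `fₙ₊₁ = fₙ + ξₙ Pₙ`, with `ξₙ` chosen from the value `fₙ(zₙ)`
  let f : ℕ → 𝕜 → 𝕜 := fun n => Nat.rec (fun _ => 0)
    (fun n fn w => fn w + c n (fn (z n)) * newtonBasis z n w) n
  have hf : ∀ n w, f n w = ∑ k ∈ range n, c k (f k (z k)) * newtonBasis z k w := by
    intro n w
    induction n with
    | zero => rfl
    | succ n ih => rw [sum_range_succ, ← ih]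
  refine ⟨fun n => c n (f n (z n)), fun n => ?_⟩
  obtain ⟨hne, hle, hmem⟩ := hc n (f n (z n))
  exact ⟨hne, hle, by rwa [sum_range_succ, ← hf]⟩

theorem Dense.exists_differentiable_ne_const_forall_mem {z : ℕ → ℂ} (hz : Injective z)
    {Y : Set ℂ} (hY : Dense Y) :
    ∃ f : ℂ → ℂ, Differentiable ℂ f ∧ (∀ c : ℂ, f ≠ fun _ => c) ∧ ∀ n, f (z n) ∈ Y := by
  have hB : ∀ n : ℕ, 0 ≤ newtonBound z n n := fun n => newtonBound_nonneg z n.cast_nonneg n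
  have hB₁ : ∀ n : ℕ, 0 < newtonBound z n n + 1 := fun n => by linarith [hB n]
  obtain ⟨ξ, hξ⟩ := hY.exists_newtonCoeffs_partialSum_mem hz
    (ε := fun n => (1 / 2) ^ n / (newtonBound z n n + 1)) fun n => div_pos (by positivity) (hB₁ n)
  refine ⟨newtonSeries z ξ, differentiable_newtonSeries ?_,
    newtonSeries_ne_const (hz.ne one_ne_zero) (hξ 1).1, fun n => ?_⟩
  · refine summable_geometric_two.of_nonneg_of_le (fun n => by have := hB n; positivity)
      fun n => ?_
    calc ‖ξ n‖ * newtonBound z n n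
        ≤ (1 / 2) ^ n / (newtonBound z n n + 1) * (newtonBound z n n + 1) :=
          mul_le_mul (hξ n).2.1 (le_add_of_nonneg_right zero_le_one) (hB n)
            (div_pos (by positivity) (hB₁ n)).le
      _ = (1 / 2) ^ n := div_mul_cancel₀ _ (hB₁ n).ne'
  · rw [newtonSeries_apply_eq_sum]
    exact (hξ n).2.2

theorem Set.Countable.exists_differentiable_ne_const_image_subset {X Y : Set ℂ}
    (hX : X.Countable) (hY : Dense Y) :
    ∃ f : ℂ → ℂ, Differentiable ℂ f ∧ (∀ c : ℂ, f ≠ fun _ => c) ∧ f '' X ⊆ Y := by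
  -- padding `X` to an infinite set gives an injective enumeration
  set S : Set ℂ := X ∪ range ((↑) : ℕ → ℂ)
  have : Countable S := (hX.union (countable_range _)).to_subtype
  have : Infinite S :=
    ((infinite_range_of_injective Nat.cast_injective).mono subset_union_right).to_subtype
  obtain ⟨e⟩ := nonempty_equiv_of_countable (α := ℕ) (β := S)
  obtain ⟨f, hfd, hfc, hfY⟩ :=
    hY.exists_differentiable_ne_const_forall_mem (Subtype.val_injective.comp e.injective)
  refine ⟨f, hfd, hfc, ?_⟩
  rintro _ ⟨x, hx, rfl⟩
  simpa using hfY (e.symm ⟨x, Or.inl hx⟩)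

lemma Set.Countable.of_mk_lt_continuum {α : Type v} {s : Set α}
    (hCH : continuum.{u} = ℵ₁) (hs : #s < 𝔠) : s.Countable := by
  have hCH' : continuum.{v} = ℵ₁ := (lift_eq_aleph_one (c := continuum.{v})).1 <| by
    rw [lift_continuum, ← lift_continuum.{v, u}, lift_eq_aleph_one.2 hCH]
  exact le_aleph0_iff_set_countable.1 (lt_aleph_one_iff.1 (hs.trans_eq hCH'))

end

theorem countable_dense_universal_of_CH_general
    (hCH : Cardinal.continuum = Cardinal.aleph 1)
    (Y : Set ℂ) (hYd : Dense Y)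
    (X : Set ℂ) (hX : Cardinal.mk X < Cardinal.continuum) :
    ∃ f : ℂ → ℂ, Differentiable ℂ f ∧ (∀ c : ℂ, f ≠ fun _ => c) ∧ f '' X ⊆ Y :=
  (Set.Countable.of_mk_lt_continuum hCH hX).exists_differentiable_ne_const_image_subset hYd

theorem countable_dense_universal_of_CH
    (hCH : Cardinal.continuum = Cardinal.aleph 1)
    (Y : Set ℂ) (hYc : Y.Countable) (hYd : Dense Y)
    (X : Set ℂ) (hX : Cardinal.mk X < Cardinal.continuum) :
    ∃ f : ℂ → ℂ, Differentiable ℂ f ∧ (∀ c : ℂ, f ≠ fun _ => c) ∧ f '' X ⊆ Y :=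
  countable_dense_universal_of_CH_general hCH Y hYd X hX
end

section
/- If Y ⊆ ℂ is a universal set, then |Y|⁺ = 2^ℵ₀; in particular 2^ℵ₀ is a successor cardinal. -/
open Cardinal Set Filter

universe u

def IsUniversal (Y : Set ℂ) : Prop :=
  Cardinal.mk Y < Cardinal.continuum ∧
    ∀ X : Set ℂ, Cardinal.mk X < Cardinal.continuum →
      ∃ f : ℂ → ℂ, Differentiable ℂ f ∧ (∀ c : ℂ, f ≠ fun _ => c) ∧ f '' X ⊆ Y

/-! If `κ⁺ < 𝔠` for `κ = #Y`, take `X` of cardinality `max κ⁺ ℵ₀` inside the closed unit disc.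
A non-constant entire function takes each value only finitely often on a compact set, so it
would map the infinite set `X` into `Y` with finite fibers, forcing `#X ≤ #Y`. -/

theorem Cardinal.mk_le_of_finite_fibers {α β : Type u} [Infinite α] (g : α → β)
    (hg : ∀ b, (g ⁻¹' {b}).Finite) : #α ≤ #β := by
  cases finite_or_infinite β with
  | inl hβ =>
    exact (Set.infinite_univ (α := α) (Set.finite_univ.preimage' fun b _ ↦ hg b)).elim
  | inr hβ =>
    calc #α ≤ #β * ℵ₀ := mk_le_mk_mul_of_mk_preimage_le g fun b ↦ (hg b).lt_aleph0.le
      _ = #β := mul_aleph0_eq (aleph0_le_mk β)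

theorem AnalyticOnNhd.finite_inter_preimage_singleton_of_isCompact {𝕜 E : Type*}
    [NontriviallyNormedField 𝕜] [PreconnectedSpace 𝕜] [NormedAddCommGroup E]
    [NormedSpace 𝕜 E] {f : 𝕜 → E} (hf : AnalyticOnNhd 𝕜 f univ) {y : E}
    (hfy : f ≠ fun _ ↦ y) {K : Set 𝕜} (hK : IsCompact K) : (K ∩ f ⁻¹' {y}).Finite := by
  rcases hf.eqOn_or_eventually_ne_of_preconnected analyticOnNhd_const isPreconnected_univ with
    hconst | hne
  · exact absurd (funext fun x ↦ hconst (mem_univ x)) hfy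
  · have := hK.finite_sdiff_of_mem_codiscreteWithin (codiscreteWithin_mono (subset_univ K) hne)
    simpa [sdiff_eq, compl_ofPred, preimage, inter_def] using this

theorem Complex.mk_closedBall_eq_continuum (x : ℂ) {r : ℝ} (hr : 0 < r) :
    #(Metric.closedBall x r) = 𝔠 := by
  rw [cardinal_eq_of_mem_nhds ℂ (Metric.closedBall_mem_nhds x hr), mk_complex]

theorem universal_succ (Y : Set ℂ) (hY : IsUniversal Y) :
    Order.succ (Cardinal.mk Y) = Cardinal.continuum := by
  obtain ⟨hYlt, huniv⟩ := hY
  refine le_antisymm (Order.succ_le_of_lt hYlt) (not_lt.mp fun hlt ↦ ?_)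
  set κ := max (Order.succ #Y) ℵ₀
  have hκ : κ < 𝔠 := max_lt hlt aleph0_lt_continuum
  obtain ⟨X, hXK, hX⟩ := le_mk_iff_exists_subset.mp
    ((Complex.mk_closedBall_eq_continuum 0 one_pos).symm ▸ hκ.le)
  obtain ⟨f, hf, hfne, hfY⟩ := huniv X (hX ▸ hκ)
  have : Infinite X := infinite_iff.mpr (hX ▸ le_max_right _ _)
  have hfib (y : ℂ) : (X ∩ f ⁻¹' {y}).Finite :=
    (Complex.analyticOnNhd_univ_iff_differentiable.mpr hf
      |>.finite_inter_preimage_singleton_of_isCompact (hfne y) (isCompact_closedBall 0 1)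
      |>.subset (inter_subset_inter_left _ hXK))
  let g := (mapsTo_iff_image_subset.mpr hfY).restrict f X Y
  have hg (y : Y) : (g ⁻¹' {y}).Finite :=
    (hfib y).preimage Subtype.val_injective.injOn
      |>.subset fun x hx ↦ ⟨x.2, congrArg Subtype.val hx⟩
  have hXY : κ ≤ #Y := hX ▸ mk_le_of_finite_fibers g hg
  exact (Order.lt_succ _).not_ge ((le_max_left _ _).trans hXY)
end

section
/- If there exists a universal set Y ⊆ ℂ, then there exists a Wetzel family. -/
open Cardinal Set Function

universe u

theorem Differentiable.countable_preimage_singleton {E : Type*} [NormedAddCommGroup E]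
    [NormedSpace ℂ E] [CompleteSpace E] {f : ℂ → E} (hf : Differentiable ℂ f)
    (hnc : ∀ c : E, f ≠ fun _ => c) (y : E) : (f ⁻¹' {y}).Countable := by
  have han : AnalyticOnNhd ℂ f univ := fun z _ => hf.analyticAt z
  rcases han.eqOn_or_eventually_ne_of_preconnected analyticOnNhd_const isPreconnected_univ
    (g := fun _ => y) with hconst | hne
  · exact absurd (funext fun z => hconst (mem_univ z)) (hnc y)
  · simpa using (HereditarilyLindelofSpace.isLindelof _).countable_of_isDiscrete
      (isDiscrete_of_codiscreteWithin (s := f ⁻¹' {y}) hne)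

theorem Cardinal.exists_wellOrder_mk_lt (α : Type*) :
    ∃ r : α → α → Prop, IsWellOrder α r ∧ ∀ a, #{b | r b a} < #α := by
  obtain ⟨r, _, hr⟩ := exists_ord_eq α
  exact ⟨r, inferInstance, fun a => (Ordinal.card_typein a).symm.trans_lt (card_typein_lt a hr)⟩

theorem IsWellOrder.exists_injective_of_forall_exists_notMem_range {α β : Type*}
    (r : α → α → Prop) [IsWellOrder α r] (p : α → β → Prop)
    (h : ∀ a (g : {b // r b a} → β), (∀ b, p b.1 (g b)) → ∃ x ∉ range g, p a x) :
    ∃ f : α → β, Injective f ∧ ∀ a, p a (f a) := by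
  choose next hnext using h
  let f : ∀ a, {x // p a x} := IsWellFounded.fix r fun a prev =>
    ⟨next a (fun b => (prev b.1 b.2).1) (fun b => (prev b.1 b.2).2), (hnext ..).2⟩
  have hf : ∀ a, (f a).1 = next a (fun b => (f b.1).1) (fun b => (f b.1).2) := fun a => by
    rw [show f a = _ from IsWellFounded.fix_eq _ _ _]
  have hnew : ∀ a b, r b a → (f a).1 ≠ (f b).1 := fun a b hba heq =>
    (hnext a (fun b => (f b.1).1) _).1 ⟨⟨b, hba⟩, heq.symm.trans (hf a)⟩
  refine ⟨fun a => (f a).1, fun a b hab => ?_, fun a => (f a).2⟩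
  rcases trichotomous_of r a b with hab' | rfl | hba
  · exact absurd hab.symm (hnew b a hab')
  · rfl
  · exact absurd hab (hnew a b hba)

theorem Cardinal.mk_preimage_le_mul_aleph0 {α β : Type u} {f : α → β}
    (hf : ∀ y, (f ⁻¹' {y}).Countable) (s : Set β) : #(f ⁻¹' s) ≤ #s * ℵ₀ := by
  rw [← biUnion_preimage_singleton]
  refine (mk_biUnion_le _ _).trans (mul_le_mul_right ?_ _)
  exact ciSup_le' fun y => (hf y.1).le_aleph0

theorem exists_forall_apply_notMem_of_countable_fibers {α β : Type u} {S : Set (α → β)}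
    {Y : Set β} (hfib : ∀ g ∈ S, ∀ y, (g ⁻¹' {y}).Countable) (hα : ℵ₀ < #α)
    (hS : #S < #α) (hY : #Y < #α) : ∃ t, ∀ g ∈ S, g t ∉ Y := by
  have hsmall : #(⋃ g ∈ S, g ⁻¹' Y) < #α := calc
    #(⋃ g ∈ S, g ⁻¹' Y) ≤ #S * ⨆ g : S, #((g : α → β) ⁻¹' Y) := mk_biUnion_le _ _
    _ ≤ #S * (#Y * ℵ₀) := by
      refine mul_le_mul_right ?_ _
      exact ciSup_le' fun g => mk_preimage_le_mul_aleph0 (hfib g.1 g.2) Y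
    _ < #α := mul_lt_of_lt hα.le hS (mul_lt_of_lt hα.le hY hα)
  obtain ⟨t, ht⟩ : (⋃ g ∈ S, g ⁻¹' Y)ᶜ.Nonempty := nonempty_compl.2 fun h => by
    rw [h, mk_univ] at hsmall
    exact hsmall.false
  exact ⟨t, fun g hg hgt => ht (mem_biUnion hg hgt)⟩

theorem IsUniversal.exists_notMem {Y : Set ℂ} (hY : IsUniversal Y) {S : Set (ℂ → ℂ)}
    (hS : ∀ g ∈ S, Differentiable ℂ g ∧ ∀ c : ℂ, g ≠ fun _ => c) (hSc : #S < 𝔠)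
    {X : Set ℂ} (hX : #X < 𝔠) :
    ∃ g ∉ S, Differentiable ℂ g ∧ (∀ c : ℂ, g ≠ fun _ => c) ∧ g '' X ⊆ Y := by
  obtain ⟨t, ht⟩ := exists_forall_apply_notMem_of_countable_fibers
    (fun g hg => (hS g hg).1.countable_preimage_singleton (hS g hg).2)
    (mk_complex ▸ aleph0_lt_continuum) (mk_complex ▸ hSc) (mk_complex ▸ hY.1)
  have hXt : #(insert t X : Set ℂ) < 𝔠 :=
    mk_insert_le.trans_lt (add_one_lt_of_lt aleph0_le_continuum hX)
  obtain ⟨g, hgd, hgc, hgY⟩ := hY.2 _ hXt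
  exact ⟨g, fun hgS => ht g hgS (hgY ⟨t, mem_insert _ _, rfl⟩), hgd, hgc,
    (image_mono (subset_insert _ _)).trans hgY⟩

theorem isWetzel_range {Y : Set ℂ} (hY : #Y < 𝔠) (r : ℂ → ℂ → Prop) [IsWellOrder ℂ r]
    (hr : ∀ z, #{w | r w z} < 𝔠) {f : ℂ → ℂ → ℂ} (hinj : Injective f)
    (hd : ∀ z, Differentiable ℂ (f z)) (hfY : ∀ z, f z '' {w | r w z} ⊆ Y) :
    IsWetzel (range f) := by
  refine ⟨forall_mem_range.2 hd, fun z => ?_⟩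
  have hsub : (fun g : ℂ → ℂ => g z) '' range f ⊆
      Y ∪ (fun w => f w z) '' insert z {w | r w z} := by
    rintro _ ⟨_, ⟨w, rfl⟩, rfl⟩
    rcases trichotomous_of r z w with h | rfl | h
    · exact Or.inl (hfY w ⟨z, h, rfl⟩)
    · exact Or.inr ⟨z, mem_insert _ _, rfl⟩
    · exact Or.inr ⟨w, mem_insert_of_mem _ h, rfl⟩
  rw [mk_range_eq f hinj, mk_complex]
  calc #((fun g : ℂ → ℂ => g z) '' range f)
      ≤ #Y + #(insert z {w | r w z} : Set ℂ) :=
        (mk_le_mk_of_subset hsub).trans ((mk_union_le _ _).trans (add_le_add_right mk_image_le _))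
    _ < 𝔠 := add_lt_of_lt aleph0_le_continuum hY
        (mk_insert_le.trans_lt (add_one_lt_of_lt aleph0_le_continuum (hr z)))

theorem wetzel_of_universal (Y : Set ℂ) (hY : IsUniversal Y) :
    ∃ F : Set (ℂ → ℂ), IsWetzel F := by
  obtain ⟨r, _, hr⟩ := exists_wellOrder_mk_lt ℂ
  rw [mk_complex] at hr
  obtain ⟨f, hinj, hf⟩ := IsWellOrder.exists_injective_of_forall_exists_notMem_range r
    (fun z g => Differentiable ℂ g ∧ (∀ c : ℂ, g ≠ fun _ => c) ∧ g '' {w | r w z} ⊆ Y)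
    fun z g hg => hY.exists_notMem (forall_mem_range.2 fun w => ⟨(hg w).1, (hg w).2.1⟩)
      (mk_range_le.trans_lt (hr z)) (hr z)
  exact ⟨range f, isWetzel_range hY.1 r hr hinj (fun z => (hf z).1) (fun z => (hf z).2.2)⟩
end

section
/- If a family F of non-constant entire functions satisfies that {f(z) : f ∈ F} is countable for every z ∈ ℂ, and 2^ℵ₀ > ℵ₁, then F is countable. -/
/-!
Distinct entire functions agree only on a discrete, hence countable, set. If `F` were
uncountable, pick `ℵ₁` of its members: the union of their pairwise agreement sets has
cardinality at most `ℵ₁ < 𝔠 = #ℂ`, so some point `z` avoids it. Evaluation at `z` is then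
injective on these `ℵ₁` functions, and their values at `z` form an uncountable set.
-/

universe u

open Cardinal Set Filter

theorem AnalyticOnNhd.countable_setOf_eq {𝕜 E : Type*} [NontriviallyNormedField 𝕜]
    [ConnectedSpace 𝕜] [SecondCountableTopology 𝕜] [NormedAddCommGroup E] [NormedSpace 𝕜 E]
    {f g : 𝕜 → E} (hf : AnalyticOnNhd 𝕜 f univ) (hg : AnalyticOnNhd 𝕜 g univ) (hfg : f ≠ g) :
    {x | f x = g x}.Countable := by
  have : DiscreteTopology {x | f x = g x} := by
    refine discreteTopology_subtype_iff.mpr fun x _ => not_neBot.mp fun h => hfg ?_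
    exact hf.eq_of_frequently_eq hg (frequently_iff_neBot.mpr h)
  exact countable_coe_iff.mp (TopologicalSpace.separableSpace_iff_countable.mp inferInstance)

theorem exists_injOn_eval_of_mk_setOf_eq_le {α β : Type u} {κ : Cardinal.{u}} (hκ : ℵ₀ ≤ κ)
    {S : Set (α → β)} (hS : #S ≤ κ) (hagree : S.Pairwise fun f g => #{x | f x = g x} ≤ κ)
    (hα : κ < #α) : ∃ x, S.InjOn fun f => f x := by
  let agree (p : S × S) : Set α := {x | (p.1 : α → β) ≠ p.2 ∧ (p.1 : α → β) x = (p.2 : α → β) x}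
  have hB : #(⋃ p, agree p) ≤ κ := calc
    #(⋃ p, agree p) ≤ #(S × S) * ⨆ p, #(agree p) := mk_iUnion_le _
    _ ≤ (κ * κ) * κ := by
      gcongr
      · simpa using mul_le_mul' hS hS
      · refine ciSup_le' fun p => ?_
        by_cases hp : (p.1 : α → β) = p.2
        · simp [agree, hp]
        · exact (mk_le_mk_of_subset fun x hx => hx.2).trans (hagree p.1.2 p.2.2 hp)
    _ = κ := by rw [mul_eq_self hκ, mul_eq_self hκ]
  obtain ⟨x, hx⟩ : ∃ x, x ∉ ⋃ p, agree p := by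
    by_contra! h
    exact (lt_of_le_of_lt hB hα).ne (by rw [eq_univ_of_forall h, mk_univ])
  refine ⟨x, fun f hf g hg hfg => ?_⟩
  by_contra hne
  exact hx (mem_iUnion.mpr ⟨(⟨f, hf⟩, ⟨g, hg⟩), hne, hfg⟩)

theorem countable_of_countable_image_eval {α β : Type u} {F : Set (α → β)}
    (hagree : F.Pairwise fun f g => {x | f x = g x}.Countable)
    (hcount : ∀ x, ((fun f : α → β => f x) '' F).Countable) (hα : ℵ₁ < #α) :
    F.Countable := by
  by_contra hF
  rw [← le_aleph0_iff_set_countable, not_le, ← aleph_one_le_iff] at hF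
  obtain ⟨S, hSF, hS⟩ := le_mk_iff_exists_subset.mp hF
  obtain ⟨x, hx⟩ := exists_injOn_eval_of_mk_setOf_eq_le aleph0_lt_aleph_one.le hS.le
    (fun f hf g hg hfg => (le_aleph0_iff_set_countable.mpr
      (hagree (hSF hf) (hSF hg) hfg)).trans aleph0_lt_aleph_one.le) hα
  have hSx : ¬ ((fun f : α → β => f x) '' S).Countable := by
    rw [← le_aleph0_iff_set_countable, mk_image_eq_of_injOn _ _ hx, hS, not_le]
    exact aleph0_lt_aleph_one
  exact hSx ((hcount x).mono (image_mono hSF))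

theorem erdos_wetzel_dixon_general (F : Set (ℂ → ℂ))
    (hdiff : ∀ f ∈ F, Differentiable ℂ f)
    (hcount : ∀ z : ℂ, Set.Countable ((fun f : ℂ → ℂ => f z) '' F))
    (hC : Cardinal.aleph 1 < Cardinal.continuum) :
    F.Countable := by
  refine countable_of_countable_image_eval (fun f hf g hg hfg => ?_) hcount ?_
  · exact AnalyticOnNhd.countable_setOf_eq (Complex.analyticOnNhd_univ_iff_differentiable.mpr
      (hdiff f hf)) (Complex.analyticOnNhd_univ_iff_differentiable.mpr (hdiff g hg)) hfg
  · -- `hC` is stated in an arbitrary universe.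
    rwa [mk_complex, ← lift_lt.{0}, lift_aleph, lift_continuum, Ordinal.lift_one]

theorem erdos_wetzel_dixon (F : Set (ℂ → ℂ))
    (hdiff : ∀ f ∈ F, Differentiable ℂ f)
    (hnc : ∀ f ∈ F, ∀ c : ℂ, f ≠ fun _ => c)
    (hcount : ∀ z : ℂ, Set.Countable ((fun f : ℂ → ℂ => f z) '' F))
    (hC : Cardinal.aleph 1 < Cardinal.continuum) :
    F.Countable :=
  erdos_wetzel_dixon_general F hdiff hcount hC
end

section
/- Assume 2^ℵ₀ = ℵ₂. Then there exists a sequence ⟨σ_α : α < ω₂⟩ of functions σ_α : ω₂ → ω₁ such that for all α < β < ω₂, the set {ξ < ω₂ : σ_α(ξ) = σ_β(ξ)} is countable. -/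
/-!
Fix injections `e_ξ : ξ → ω₁` for `ξ < ω₂` and build `σ_β` by recursion on `β`, putting
`σ_β(ξ) = e_ξ(β)` for `ξ > β`; then `σ_α` and `σ_β` never agree above `max α β`.
Below, `σ_β` diagonalizes against the `ℵ₁` earlier functions: code points and indices
by ordinals `< ω₁`, and at `ξ` avoid `σ_α(ξ)` only for the countably many `α` whose
code is at most that of `ξ`. Then `σ_β` can agree with `σ_α` only where the code of `ξ`
is below that of `α`, a countable set.
-/

open Cardinal Set

universe u v

namespace Cardinal

theorem exists_fun_mk_agree_lt {X I : Type u} {Y : Type v} {κ : Cardinal.{u}}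
    (hκ : ℵ₀ ≤ κ) (hX : #X ≤ κ) (hI : #I ≤ κ) (hY : lift.{v} κ ≤ lift.{u} #Y)
    (f : I → X → Y) : ∃ g : X → Y, ∀ i, #{x | g x = f i x} < κ := by
  have : Infinite κ.out := by rwa [infinite_iff, mk_out]
  -- `r` plays the role of `<` between codes in a well-order of type `κ`
  obtain ⟨r, hr_not, hr⟩ := exists_rel_mk_fibers_lt κ.out
  rw [mk_out] at hr_not hr
  obtain ⟨ι⟩ : Nonempty (X ↪ κ.out) := by rwa [← le_def, mk_out]
  obtain ⟨j⟩ : Nonempty (I ↪ κ.out) := by rwa [← le_def, mk_out]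
  have hfree : ∀ x, ∃ y, ∀ i, ¬ r (ι x) (j i) → f i x ≠ y := by
    intro x
    by_contra! hcover
    have hsurj : Function.Surjective fun i : {i // ¬ r (ι x) (j i)} => f i x := fun y =>
      let ⟨i, hi, hiy⟩ := hcover y
      ⟨⟨i, hi⟩, hiy⟩
    have hsmall : #{i // ¬ r (ι x) (j i)} < κ :=
      (mk_le_of_injective (Subtype.map_injective (p := fun i => ¬ r (ι x) (j i))
        (q := fun z => ¬ r (ι x) z) (fun _ h => h) j.injective)).trans_lt (hr_not (ι x))
    exact (hY.trans (lift_mk_le_lift_mk_of_surjective hsurj)).not_gt (lift_strictMono hsmall)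
  choose g hg using hfree
  refine ⟨g, fun i => lt_of_le_of_lt ?_ (hr (j i))⟩
  exact mk_le_of_injective (Subtype.map_injective (q := fun z => r z (j i))
    (fun x hx => not_not.mp fun h => hg x i h hx.symm) ι.injective)

theorem exists_family_mk_agree_lt {W : Type u} [LinearOrder W] [WellFoundedLT W]
    {Y : Type v} {κ : Cardinal.{u}} (hκ : ℵ₀ ≤ κ) (hW : ∀ w : W, #(Iic w) ≤ κ)
    (hY : lift.{v} κ ≤ lift.{u} #Y) :
    ∃ σ : W → W → Y, ∀ α β, α < β → #{ξ | σ α ξ = σ β ξ} < κ := by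
  have hIio (w : W) : #(Iio w) ≤ κ :=
    (mk_le_mk_of_subset Iio_subset_Iic_self).trans (hW w)
  let e (ξ : W) : Iio ξ ↪ Y := (lift_mk_le'.mp ((lift_le.mpr (hIio ξ)).trans hY)).some
  choose diag hdiag using fun β (f : Iio β → Iic β → Y) =>
    exists_fun_mk_agree_lt hκ (hW β) (hIio β) hY f
  let σ : W → W → Y := wellFounded_lt.fix fun β τ ξ =>
    if h : β < ξ then e ξ ⟨β, h⟩ else diag β (fun α x => τ α α.2 x) ⟨ξ, not_lt.mp h⟩
  have hσ (β ξ : W) : σ β ξ = if h : β < ξ then e ξ ⟨β, h⟩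
      else diag β (fun α x => σ α x) ⟨ξ, not_lt.mp h⟩ :=
    congrFun (wellFounded_lt.fix_eq (C := fun _ => W → Y) _ β) ξ
  refine ⟨σ, fun α β hαβ => ?_⟩
  have hagree : {ξ | σ α ξ = σ β ξ} ⊆
      Subtype.val '' {x : Iic β | diag β (fun α x => σ α x) x = σ α x} := by
    intro ξ (hξ : σ α ξ = σ β ξ)
    by_cases hβξ : β < ξ
    · rw [hσ α, hσ β, dif_pos (hαβ.trans hβξ), dif_pos hβξ] at hξ
      exact absurd (congrArg Subtype.val ((e ξ).injective hξ)) hαβ.ne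
    · refine ⟨⟨ξ, not_lt.mp hβξ⟩, ?_, rfl⟩
      rw [hσ β, dif_neg hβξ] at hξ
      exact hξ.symm
  exact (mk_le_mk_of_subset hagree).trans_lt (mk_image_le.trans_lt (hdiag β _ ⟨α, hαβ⟩))

theorem mk_subtype_lt_ord (c : Cardinal.{u}) :
    #{o : Ordinal.{u} // o < c.ord} = lift.{u + 1} c := by
  have := mk_Iio_ordinal c.ord
  rwa [card_ord] at this

theorem mk_Iic_lt_of_lt_ord {c : Cardinal.{u}} (hc : ℵ₀ ≤ c)
    (w : {o : Ordinal.{u} // o < c.ord}) : #(Iic w) < lift.{u + 1} c :=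
  calc #(Iic w) ≤ #(Iio (Order.succ w.1)) :=
        mk_le_of_injective (f := fun x : Iic w =>
          (⟨x.1.1, mem_Iio.mpr (Order.lt_succ_of_le x.2)⟩ : Iio (Order.succ w.1)))
          fun _ _ h => Subtype.ext (Subtype.ext (congrArg Subtype.val h :))
    _ = lift (Order.succ w.1).card := mk_Iio_ordinal _
    _ < lift c := lift_lt.mpr (lt_ord.mp ((isSuccLimit_ord hc).succ_lt w.2))

theorem exists_aleph_two_family_countable_agree :
    ∃ σ : {o : Ordinal.{u} // o < (ℵ_ 2).ord} → {o : Ordinal.{u} // o < (ℵ_ 2).ord} →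
        {o : Ordinal.{v} // o < (ℵ_ 1).ord},
      ∀ α β, α < β → {ξ | σ α ξ = σ β ξ}.Countable := by
  have hW (w : {o : Ordinal.{u} // o < (ℵ_ 2).ord}) : #(Iic w) ≤ ℵ_ 1 := by
    have h2 : lift.{u + 1} (ℵ_ 2) = Order.succ (ℵ_ 1) := by
      rw [lift_aleph, Ordinal.lift_ofNat, succ_aleph, one_add_one_eq_two]
    exact Order.lt_succ_iff.mp ((mk_Iic_lt_of_lt_ord (aleph0_le_aleph 2) w).trans_eq h2)
  have hY : lift.{v + 1} (ℵ_ 1 : Cardinal.{u + 1}) ≤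
      lift.{u + 1} #{o : Ordinal.{v} // o < (ℵ_ 1).ord} := by
    rw [mk_subtype_lt_ord]
    simp
  obtain ⟨σ, hσ⟩ := exists_family_mk_agree_lt (aleph0_le_aleph 1) hW hY
  refine ⟨σ, fun α β hαβ => le_aleph0_iff_set_countable.mp ?_⟩
  rw [← Order.lt_succ_iff, succ_aleph0]
  exact hσ α β hαβ

end Cardinal

noncomputable def Ordinal.liftAlephTwo :
    {o : Ordinal.{u} // o < (ℵ_ 2).ord} ↪o {o : Ordinal.{max u v} // o < (ℵ_ 2).ord} :=
  OrderEmbedding.ofStrictMono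
    (fun x => ⟨lift.{v} x.1, by
      simpa [lift_ord, lift_aleph] using lift_lt.{v}.mpr x.2⟩)
    fun _ _ h => lift_lt.mpr h

theorem strongly_ad_functions_of_continuum_aleph_two_general :
    ∃ σ : {o : Ordinal // o < (Cardinal.aleph 2).ord} →
        {o : Ordinal // o < (Cardinal.aleph 2).ord} →
        {o : Ordinal // o < (Cardinal.aleph 1).ord},
      ∀ α β, α < β → Set.Countable {ξ | σ α ξ = σ β ξ} := by
  -- the three subtypes live in independent universes: lift indices and points to a common one
  obtain ⟨σ, hσ⟩ := Cardinal.exists_aleph_two_family_countable_agree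
  exact ⟨fun α ξ =>
      σ (Ordinal.liftAlephTwo.{u_1, u_2} α) (Ordinal.liftAlephTwo.{u_2, u_1} ξ),
    fun α β hαβ => (hσ _ _ (Ordinal.liftAlephTwo.strictMono hαβ)).preimage
      Ordinal.liftAlephTwo.injective⟩

theorem strongly_ad_functions_of_continuum_aleph_two
    (h : Cardinal.continuum = Cardinal.aleph 2) :
    ∃ σ : {o : Ordinal // o < (Cardinal.aleph 2).ord} →
        {o : Ordinal // o < (Cardinal.aleph 2).ord} →
        {o : Ordinal // o < (Cardinal.aleph 1).ord},
      ∀ α β, α < β → Set.Countable {ξ | σ α ξ = σ β ξ} :=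
  strongly_ad_functions_of_continuum_aleph_two_general
end

section
/- Let O ⊆ (0,∞) be an open set containing arbitrarily small positive numbers. Then there exists an uncountable set X ⊆ ℝ such that for all distinct x, y ∈ X, |x − y| ∈ O. -/
open Metric Finset in
noncomputable def cantorSeqAux (pick E : ℝ → ℝ) : ℕ → ℝ × ℝ
  | 0 => (pick 1, 1)
  | n + 1 =>
    let p := cantorSeqAux pick E n
    let d := min (p.2 / 2) (E p.1 / 4)
    (pick d, d)

theorem uncountable_set_with_distances_in_open (O : Set ℝ)
    (hO : IsOpen O) (hsub : O ⊆ Set.Ioi (0 : ℝ))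
    (hsmall : ∀ δ > (0 : ℝ), ∃ t ∈ O, t < δ) :
    ∃ X : Set ℝ, ¬ X.Countable ∧ ∀ x ∈ X, ∀ y ∈ X, x ≠ y → |x - y| ∈ O := by
  classical
  -- choice functions
  choose pick0 hpick0O hpick0lt using hsmall
  set pick : ℝ → ℝ := fun δ => if h : 0 < δ then pick0 δ h else 1 with hpickdef
  have hpickO : ∀ δ : ℝ, 0 < δ → pick δ ∈ O := by
    intro δ h; simp only [hpickdef, dif_pos h]; exact hpick0O δ h
  have hpicklt : ∀ δ : ℝ, 0 < δ → pick δ < δ := by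
    intro δ h; simp only [hpickdef, dif_pos h]; exact hpick0lt δ h
  choose ε0 hε0pos hε0ball using fun x (h : x ∈ O) => Metric.isOpen_iff.mp hO x h
  set E : ℝ → ℝ := fun x => if h : x ∈ O then min (ε0 x h) x else 1 with hEdef
  have hEpos : ∀ x ∈ O, 0 < E x := by
    intro x hx; simp only [hEdef, dif_pos hx]
    exact lt_min (hε0pos x hx) (hsub hx)
  have hEball : ∀ x ∈ O, Metric.ball x (E x) ⊆ O := by
    intro x hx; simp only [hEdef, dif_pos hx]
    exact (Metric.ball_subset_ball (min_le_left _ _)).trans (hε0ball x hx)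
  -- the sequences
  set t : ℕ → ℝ := fun n => (cantorSeqAux pick E n).1 with htdef
  set d : ℕ → ℝ := fun n => (cantorSeqAux pick E n).2 with hddef
  have hbase : ∀ n, t n ∈ O ∧ t n < d n ∧ 0 < d n := by
    intro n
    induction n with
    | zero =>
      refine ⟨hpickO 1 one_pos, hpicklt 1 one_pos, one_pos⟩
    | succ n ih =>
      obtain ⟨hO', _, hd⟩ := ih
      have hpos : 0 < min (d n / 2) (E (t n) / 4) :=
        lt_min (by linarith) (by have := hEpos _ hO'; linarith)
      exact ⟨hpickO _ hpos, hpicklt _ hpos, hpos⟩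
  have htO : ∀ n, t n ∈ O := fun n => (hbase n).1
  have htpos : ∀ n, 0 < t n := fun n => hsub (htO n)
  have htd : ∀ n, t n < d n := fun n => (hbase n).2.1
  have hdpos : ∀ n, 0 < d n := fun n => (hbase n).2.2
  have hdsucc : ∀ n, d (n + 1) = min (d n / 2) (E (t n) / 4) := fun n => rfl
  have hd2 : ∀ n, d (n + 1) ≤ d n / 2 := fun n => (hdsucc n) ▸ min_le_left _ _
  have hd4 : ∀ n, d (n + 1) ≤ E (t n) / 4 := fun n => (hdsucc n) ▸ min_le_right _ _
  have hgeom : ∀ n k, d (n + 1 + k) ≤ d (n + 1) * (1 / 2) ^ k := by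
    intro n k
    induction k with
    | zero => simp
    | succ k ih =>
      have h1 : d (n + 1 + (k + 1)) ≤ d (n + 1 + k) / 2 := by
        have h0 := hd2 (n + 1 + k)
        have e : n + 1 + k + 1 = n + 1 + (k + 1) := by omega
        rwa [e] at h0
      calc d (n + 1 + (k + 1)) ≤ d (n + 1 + k) / 2 := h1
        _ ≤ d (n + 1) * (1 / 2) ^ k / 2 := by linarith
        _ = d (n + 1) * (1 / 2) ^ (k + 1) := by ring
  have htle : ∀ n k, t (n + 1 + k) ≤ d (n + 1) * (1 / 2) ^ k :=
    fun n k => (htd _).le.trans (hgeom n k)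
  -- summability
  have hhalf : Summable (fun k : ℕ => (1 / 2 : ℝ) ^ k) :=
    summable_geometric_of_lt_one (by norm_num) (by norm_num)
  have htail_sum : ∀ n, Summable (fun k : ℕ => t (n + 1 + k)) := by
    intro n
    exact Summable.of_nonneg_of_le (fun k => (htpos _).le)
      (fun k => htle n k) (hhalf.mul_left (d (n + 1)))
  have htsum : Summable t := by
    have := htail_sum 0
    have h1 : (fun k : ℕ => t (0 + 1 + k)) = fun k : ℕ => t (k + 1) := by
      funext k; congr 1; omega
    rw [h1] at this
    exact (summable_nat_add_iff 1).mp this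
  have htail_bound : ∀ n, ∑' k : ℕ, t (n + 1 + k) < E (t n) := by
    intro n
    have h1 : ∑' k : ℕ, t (n + 1 + k) ≤ ∑' k : ℕ, d (n + 1) * (1 / 2) ^ k :=
      Summable.tsum_le_tsum (fun k => htle n k) (htail_sum n) (hhalf.mul_left _)
    have h2 : ∑' k : ℕ, d (n + 1) * (1 / 2) ^ k = d (n + 1) * 2 := by
      rw [tsum_mul_left, tsum_geometric_of_lt_one (by norm_num) (by norm_num)]
      norm_num
    have h3 := hd4 n
    have h4 := hEpos _ (htO n)
    calc ∑' k : ℕ, t (n + 1 + k) ≤ d (n + 1) * 2 := h2 ▸ h1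
      _ ≤ E (t n) / 2 := by linarith
      _ < E (t n) := by linarith
  -- the embedding
  set g : (ℕ → Bool) → ℕ → ℝ := fun a k => if a k then t k else 0 with hgdef
  have hg_nonneg : ∀ a k, 0 ≤ g a k := by
    intro a k; simp only [hgdef]; split
    · exact (htpos k).le
    · exact le_refl 0
  have hg_le : ∀ a k, g a k ≤ t k := by
    intro a k; simp only [hgdef]; split
    · exact le_refl _
    · exact (htpos k).le
  have hgsum : ∀ a, Summable (g a) :=
    fun a => Summable.of_nonneg_of_le (hg_nonneg a) (hg_le a) htsum
  set f : (ℕ → Bool) → ℝ := fun a => ∑' k, g a k with hfdef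
  -- key distance estimate
  have key : ∀ a b : ℕ → Bool, ∀ n0 : ℕ, (∀ k, k < n0 → a k = b k) →
      a n0 = true → b n0 = false → f a - f b ∈ O := by
    intro a b n0 hlt han hbn
    set h : ℕ → ℝ := fun k => g a k - g b k with hhdef
    have hhsum : Summable h := (hgsum a).sub (hgsum b)
    have hfab : f a - f b = ∑' k, h k := (Summable.tsum_sub (hgsum a) (hgsum b)).symm
    have hsplit := Summable.sum_add_tsum_nat_add (n0 + 1) hhsum
    have hfin : ∑ i ∈ Finset.range (n0 + 1), h i = t n0 := by
      rw [Finset.sum_eq_single n0]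
      · simp only [hhdef, hgdef, han, hbn]; simp
      · intro k hk hkne
        have : k < n0 := by
          have := Finset.mem_range.mp hk; omega
        simp only [hhdef, hgdef, hlt k this]; ring
      · intro hk; exact absurd (Finset.self_mem_range_succ n0) hk
    have hhshift_sum : Summable (fun i : ℕ => h (i + (n0 + 1))) :=
      (summable_nat_add_iff (n0 + 1)).mpr hhsum
    have habs_le : ∀ i : ℕ, |h (i + (n0 + 1))| ≤ t (n0 + 1 + i) := by
      intro i
      have h1 : n0 + 1 + i = i + (n0 + 1) := by omega
      rw [h1]
      simp only [hhdef, hgdef]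
      rcases Bool.eq_false_or_eq_true (a (i + (n0 + 1))) with ha | ha <;>
        rcases Bool.eq_false_or_eq_true (b (i + (n0 + 1))) with hb | hb <;>
          simp [ha, hb, abs_of_nonneg (htpos (i + (n0 + 1))).le, (htpos (i + (n0 + 1))).le,
            abs_of_nonpos (neg_nonpos_of_nonneg (htpos (i + (n0 + 1))).le)]
    have htail_lt : |∑' i : ℕ, h (i + (n0 + 1))| < E (t n0) := by
      have h1 : |∑' i : ℕ, h (i + (n0 + 1))| ≤ ∑' i : ℕ, |h (i + (n0 + 1))| := by
        simpa [Real.norm_eq_abs] using norm_tsum_le_tsum_norm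
          (f := fun i : ℕ => h (i + (n0 + 1))) (by simpa [Real.norm_eq_abs] using hhshift_sum.abs)
      have h2 : ∑' i : ℕ, |h (i + (n0 + 1))| ≤ ∑' i : ℕ, t (n0 + 1 + i) :=
        Summable.tsum_le_tsum habs_le hhshift_sum.abs (htail_sum n0)
      calc |∑' i : ℕ, h (i + (n0 + 1))| ≤ ∑' i : ℕ, t (n0 + 1 + i) := h1.trans h2
        _ < E (t n0) := htail_bound n0
    have hmem : f a - f b ∈ Metric.ball (t n0) (E (t n0)) := by
      rw [Metric.mem_ball, Real.dist_eq, hfab, ← hsplit, hfin]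
      simpa using htail_lt
    exact hEball _ (htO n0) hmem
  -- distances in O
  have hdist : ∀ a b : ℕ → Bool, a ≠ b → |f a - f b| ∈ O := by
    intro a b hab
    have hex : ∃ k, a k ≠ b k := by
      by_contra hc
      push_neg at hc
      exact hab (funext hc)
    set n0 := Nat.find hex with hn0
    have hne : a n0 ≠ b n0 := Nat.find_spec hex
    have hlt : ∀ k, k < n0 → a k = b k := by
      intro k hk
      by_contra hc
      have h2 : n0 ≤ k := Nat.find_le hc
      omega
    rcases Bool.eq_false_or_eq_true (a n0) with ha | ha
    · have hb : b n0 = false := by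
        rcases Bool.eq_false_or_eq_true (b n0) with hb | hb
        · exact absurd (ha.trans hb.symm) hne
        · exact hb
      have := key a b n0 hlt ha hb
      have hpos : 0 < f a - f b := hsub this
      rw [abs_of_pos hpos]
      exact this
    · have hb : b n0 = true := by
        rcases Bool.eq_false_or_eq_true (b n0) with hb | hb
        · exact hb
        · exact absurd (ha.trans hb.symm) hne
      have := key b a n0 (fun k hk => (hlt k hk).symm) hb ha
      have hpos : 0 < f b - f a := hsub this
      rw [abs_sub_comm, abs_of_pos hpos]
      exact this
  -- injectivity
  have hinj : Function.Injective f := by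
    intro a b hfab
    by_contra hab
    have := hsub (hdist a b hab)
    rw [hfab, sub_self, abs_zero] at this
    exact lt_irrefl 0 (Set.mem_Ioi.mp this)
  -- conclusion
  refine ⟨Set.range f, ?_, ?_⟩
  · intro hc
    have huncount : Uncountable (ℕ → Bool) := by
      rw [← Cardinal.aleph0_lt_mk_iff]
      have h : Cardinal.mk (ℕ → Bool) = 2 ^ Cardinal.aleph0 := by
        rw [Cardinal.mk_arrow, Cardinal.mk_bool, Cardinal.mk_nat]; simp
      rw [h]
      exact Cardinal.cantor _
    have := hc.preimage hinj
    rw [Set.preimage_range] at this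
    rw [Set.countable_univ_iff] at this
    exact (not_countable_iff.mpr huncount) this
  · rintro x ⟨a, rfl⟩ y ⟨b, rfl⟩ hxy
    exact hdist a b (fun h => hxy (congrArg f h))
end

section
/- Let X, Y ⊆ ℂ with X uncountable. Suppose that for every x in the distance set D(X) = {|z₀ − z₁| : z₀, z₁ ∈ X, z₀ ≠ z₁} and every y in D(Y) = {|w₀ − w₁| : w₀, w₁ ∈ Y, w₀ ≠ w₁}, we have min(x,y) < max(x,y)². Then there is no non-constant entire function f with f(X) ⊆ Y. -/
/-!
If `f` is entire and non-constant, the zeros of `f'` are countable, so the uncountable set `X`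
has a point `x` with `f' x ≠ 0` that accumulates points of `X`. Near such a point
`‖f z - f x‖` and `‖z - x‖` are comparable and tend to `0`, so their maximum squared is at most
their minimum, which contradicts the distance hypothesis for `z ∈ X` close to `x`.
-/

open Filter Set Topology Asymptotics

theorem Set.exists_mem_accPt_of_not_countable {X : Type*} [TopologicalSpace X]
    [HereditarilyLindelofSpace X] {s : Set X} (hs : ¬ s.Countable) :
    ∃ x ∈ s, AccPt x (𝓟 s) := by
  by_contra! h
  exact hs <| (HereditarilyLindelofSpace.isLindelof s).countable (discreteTopology_of_noAccPts h)

theorem AnalyticOnNhd.countable_preimage_zero {𝕜 E : Type*} [NontriviallyNormedField 𝕜]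
    [SecondCountableTopology 𝕜] [ConnectedSpace 𝕜] [NormedAddCommGroup E] [NormedSpace 𝕜 E]
    {f : 𝕜 → E} (hf : AnalyticOnNhd 𝕜 f univ) {x : 𝕜} (hx : f x ≠ 0) :
    (f ⁻¹' {0}).Countable := by
  have := isDiscrete_of_codiscreteWithin (s := f ⁻¹' {0})
    (hf.preimage_zero_mem_codiscreteWithin hx trivial isConnected_univ)
  rw [inter_univ] at this
  exact (HereditarilyLindelofSpace.isLindelof _).countable_of_isDiscrete this

theorem HasDerivAt.isTheta_sub {𝕜 F : Type*} [NontriviallyNormedField 𝕜] [NormedAddCommGroup F]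
    [NormedSpace 𝕜 F] {f : 𝕜 → F} {f' : F} {x : 𝕜} (hf : HasDerivAt f f' x) (hf' : f' ≠ 0) :
    (f · - f x) =Θ[𝓝 x] (· - x) := by
  have hx : Tendsto (fun z => (z, x)) (𝓝 x) (𝓝 x ×ˢ pure x) :=
    tendsto_id.prodMk tendsto_const_pure
  have h := HasDerivAtFilter.isTheta_sub hf hf'
  exact ⟨h.1.comp_tendsto hx, h.2.comp_tendsto hx⟩

theorem Asymptotics.IsTheta.eventually_max_sq_le_min {α E F : Type*} [NormedAddCommGroup E]
    [NormedAddCommGroup F] {l : Filter α} {u : α → E} {v : α → F} (huv : u =Θ[l] v)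
    (hu : Tendsto u l (𝓝 0)) :
    ∀ᶠ a in l, max ‖u a‖ ‖v a‖ ^ 2 ≤ min ‖u a‖ ‖v a‖ := by
  obtain ⟨C, hC, hCuv⟩ := huv.isBigO.exists_pos
  obtain ⟨C', -, hCvu⟩ := huv.isBigO_symm.exists_pos
  set K := max C C'
  have hK : 0 < K := lt_max_of_lt_left hC
  have hv : Tendsto v l (𝓝 0) := huv.isBigO_symm.trans_tendsto hu
  filter_upwards [hCuv.bound, hCvu.bound,
    (tendsto_zero_iff_norm_tendsto_zero.1 hu).eventually (ge_mem_nhds (inv_pos.2 hK)),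
    (tendsto_zero_iff_norm_tendsto_zero.1 hv).eventually (ge_mem_nhds (inv_pos.2 hK))]
    with a huv hvu hu hv
  have hmax : max ‖u a‖ ‖v a‖ ≤ K * min ‖u a‖ ‖v a‖ := by
    rcases le_total ‖u a‖ ‖v a‖ with h | h
    · rw [max_eq_right h, min_eq_left h]; nlinarith [le_max_right C C', norm_nonneg (u a)]
    · rw [max_eq_left h, min_eq_right h]; nlinarith [le_max_left C C', norm_nonneg (v a)]
  calc max ‖u a‖ ‖v a‖ ^ 2 ≤ K⁻¹ * (K * min ‖u a‖ ‖v a‖) := by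
        rw [sq]; gcongr; exact max_le hu hv
    _ = min ‖u a‖ ‖v a‖ := inv_mul_cancel_left₀ hK.ne' _

theorem no_entire_map_of_distance_sets (X Y : Set ℂ) (hX : ¬ X.Countable)
    (hdist : ∀ x ∈ {d : ℝ | ∃ z₀ ∈ X, ∃ z₁ ∈ X, z₀ ≠ z₁ ∧ d = ‖z₀ - z₁‖},
      ∀ y ∈ {d : ℝ | ∃ w₀ ∈ Y, ∃ w₁ ∈ Y, w₀ ≠ w₁ ∧ d = ‖w₀ - w₁‖},
      min x y < max x y ^ 2) :
    ¬ ∃ f : ℂ → ℂ, Differentiable ℂ f ∧ (∀ c : ℂ, f ≠ fun _ => c) ∧ f '' X ⊆ Y := by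
  rintro ⟨f, hf, hnc, hXY⟩
  obtain ⟨x₀, hx₀⟩ : ∃ x₀, deriv f x₀ ≠ 0 := by
    by_contra! h
    exact hnc (f 0) (funext fun z => is_const_of_deriv_eq_zero hf h z 0)
  have hZ : (deriv f ⁻¹' {0}).Countable :=
    AnalyticOnNhd.deriv (fun z _ => hf.analyticAt z) |>.countable_preimage_zero hx₀
  obtain ⟨x, ⟨hxX, hx⟩, hacc⟩ := exists_mem_accPt_of_not_countable fun h => hX (h.of_sdiff hZ)
  have hcomparable := ((hf x).hasDerivAt.isTheta_sub hx).symm.eventually_max_sq_le_min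
    (tendsto_sub_nhds_zero_iff.2 tendsto_id)
  obtain ⟨z, ⟨hzx, hzX, -⟩, hle⟩ :=
    ((accPt_iff_frequently.1 hacc).and_eventually hcomparable).exists
  have hfzx : f z ≠ f x := by
    intro h
    simp [h, sub_eq_zero, hzx] at hle
  have hlt := hdist _ ⟨z, hzX, x, hxX, hzx, rfl⟩ _
    ⟨f z, hXY (mem_image_of_mem f hzX), f x, hXY (mem_image_of_mem f hxX), hfzx, rfl⟩
  linarith
end

section
/- If F is a Wetzel family and ⟨z_α : α < κ⟩ is an enumeration of ℂ (κ = 2^ℵ₀), then there exist cardinals μ_α < 2^ℵ₀ and an injection assigning to each f ∈ F a function σ_f ∈ ∏_{α<κ} μ_α such that for distinct f, g ∈ F, the set {α < κ : σ_f(α) = σ_g(α)} is countable. -/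
/-!
Code `f ∈ F` by its values `f (z α)`, each read through a fixed bijection of the value set
`{f (z α) | f ∈ F}` onto an initial segment of the ordinals. The codes of `f` and `g` then agree
exactly at the `α` with `f (z α) = g (z α)`, and two distinct entire functions agree only on a
discrete, hence countable, subset of `ℂ`. The value sets have size `< 𝔠` because `#F ≤ 𝔠`: an
entire function is determined by its values on a countable dense set.
-/

open Cardinal Set TopologicalSpace

universe u

theorem countable_setOf_eq_of_differentiable {E : Type*} [NormedAddCommGroup E]
    [NormedSpace ℂ E] [CompleteSpace E] {f g : ℂ → E} (hf : Differentiable ℂ f)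
    (hg : Differentiable ℂ g) (hne : f ≠ g) : {w | f w = g w}.Countable := by
  have hfa : AnalyticOnNhd ℂ f univ := fun w _ => hf.analyticAt w
  have hga : AnalyticOnNhd ℂ g univ := fun w _ => hg.analyticAt w
  rcases hfa.eqOn_or_eventually_ne_of_preconnected hga isPreconnected_univ with heq | hne_ev
  · exact absurd (funext fun w => heq (mem_univ w)) hne
  · have hdisc : IsDiscrete {w | f w = g w} := by
      simpa only [compl_ofPred, not_not] using (mem_codiscrete'.1 hne_ev).2
    exact (HereditarilyLindelofSpace.isLindelof _).countable_of_isDiscrete hdisc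

theorem mk_le_continuum_of_continuous {X Y : Type u} [TopologicalSpace X] [SeparableSpace X]
    [TopologicalSpace Y] [T2Space Y] (hY : #Y ≤ 𝔠) {F : Set (X → Y)}
    (hF : ∀ f ∈ F, Continuous f) : #F ≤ 𝔠 := by
  obtain ⟨s, hs_countable, hs_dense⟩ := exists_countable_dense X
  have restrict_injective : Function.Injective fun (f : F) (x : s) => (f : X → Y) x :=
    fun f g hfg => Subtype.ext <| Continuous.ext_on hs_dense (hF f f.2) (hF g g.2) fun x hx =>
      congrFun hfg ⟨x, hx⟩
  calc #F ≤ #(s → Y) := mk_le_of_injective restrict_injective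
    _ = #Y ^ #s := (power_def Y s).symm
    _ ≤ 𝔠 ^ ℵ₀ := power_le_power_right hY |>.trans <|
        power_le_power_left continuum_ne_zero (mk_le_aleph0_iff.2 hs_countable.to_subtype)
    _ = 𝔠 := continuum_power_aleph0

theorem exists_ordinal_code {ι A Y : Type*} (v : ι → A → Y) :
    ∃ σ : A → ∀ α, {o : Ordinal // o < (lift.{u} #(range (v α))).ord},
      ∀ a b α, σ a α = σ b α ↔ v α a = v α b := by
  have e : ∀ α, range (v α) ≃ {o : Ordinal // o < (lift.{u} #(range (v α))).ord} := fun α =>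
    Classical.choice <| lift_mk_eq'.1 <| by
      rw [show #{o : Ordinal // o < _} = _ from mk_Iio_ordinal _]
      simp
  refine ⟨fun a α => e α ⟨v α a, mem_range_self a⟩, fun a b α => ?_⟩
  rw [(e α).injective.eq_iff, Subtype.mk.injEq]

theorem wetzel_gives_ad_functions_general (F : Set (ℂ → ℂ)) (hF : IsWetzel F)
    (ι : Type)
    (z : ι → ℂ) (hz : Function.Bijective z) :
    ∃ μ : ι → Cardinal, (∀ α, μ α < Cardinal.continuum) ∧
      ∃ σ : F → ∀ α : ι, {o : Ordinal // o < (μ α).ord},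
        Function.Injective σ ∧
        ∀ f g : F, f ≠ g → Set.Countable {α : ι | σ f α = σ g α} := by
  obtain ⟨hF_entire, hF_values⟩ := hF
  have hF_card : #F ≤ 𝔠 := mk_le_continuum_of_continuous mk_complex.le
    fun f hf => (hF_entire f hf).continuous
  obtain ⟨σ, hσ⟩ := exists_ordinal_code fun α (f : F) => (f : ℂ → ℂ) (z α)
  refine ⟨_, fun α => ?_, σ, fun f g hfg => ?_, fun f g hfg => ?_⟩
  · rw [lift_lt_continuum, ← image_eq_range (fun f : ℂ → ℂ => f (z α)) F]
    exact (hF_values (z α)).trans_le hF_card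
  · exact Subtype.ext <| funext <| hz.surjective.forall.2 fun α => (hσ f g α).1 (congrFun hfg α)
  · exact ((countable_setOf_eq_of_differentiable (hF_entire f f.2) (hF_entire g g.2)
      (Subtype.coe_ne_coe.2 hfg)).preimage hz.injective).mono fun α => (hσ f g α).1

theorem wetzel_gives_ad_functions (F : Set (ℂ → ℂ)) (hF : IsWetzel F)
    (ι : Type) (hι : Cardinal.mk ι = Cardinal.continuum)
    (z : ι → ℂ) (hz : Function.Bijective z) :
    ∃ μ : ι → Cardinal, (∀ α, μ α < Cardinal.continuum) ∧
      ∃ σ : F → ∀ α : ι, {o : Ordinal // o < (μ α).ord},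
        Function.Injective σ ∧
        ∀ f g : F, f ≠ g → Set.Countable {α : ι | σ f α = σ g α} :=
  wetzel_gives_ad_functions_general F hF ι z hz
end
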